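/- arXiv:2604.12848 — 4 statements merged into one kernel-verified Lean document; each statement's English description precedes it below -/
import Mathlib

section
/- With A symmetric positive definite, Z full column rank, and P = I − A Z (Zᵀ A Z)⁻¹ Zᵀ, the deflated matrix P A is symmetric positive semidefinite. -/
open Matrix

theorem deflation_PA_posSemidef {n r : ℕ}
    (A : Matrix (Fin n) (Fin n) ℝ) (hA : A.PosDef)
    (Z : Matrix (Fin n) (Fin r) ℝ) (hZ : Z.rank = r)
    (P : Matrix (Fin n) (Fin n) ℝ)
    (hP : P = 1 - A * Z * (Zᵀ * A * Z)⁻¹ * Zᵀ) :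
    (P * A).PosSemidef := by
  -- Z has trivial kernel
  have hker : LinearMap.ker Z.mulVecLin = ⊥ := by
    have h1 : Module.finrank ℝ (LinearMap.range Z.mulVecLin) +
        Module.finrank ℝ (LinearMap.ker Z.mulVecLin) = r := by
      simpa using LinearMap.finrank_range_add_finrank_ker Z.mulVecLin
    have h2 : Module.finrank ℝ (LinearMap.range Z.mulVecLin) = r := hZ
    have h3 : Module.finrank ℝ (LinearMap.ker Z.mulVecLin) = 0 := by omega
    exact Submodule.finrank_eq_zero.mp h3
  have hinj : Function.Injective Z.mulVec := by
    have := LinearMap.ker_eq_bot.mp hker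
    simpa [Function.Injective, Matrix.mulVecLin_apply] using this
  -- Zᵀ A Z is positive definite
  have hE : (Zᵀ * A * Z).PosDef := by
    refine Matrix.PosDef.of_dotProduct_mulVec_pos ?_ (fun x hx => ?_)
    · have := Matrix.isHermitian_conjTranspose_mul_mul Z hA.1
      simpa [Matrix.conjTranspose_eq_transpose_of_trivial, Matrix.mul_assoc] using this
    · have hZx : Z *ᵥ x ≠ 0 := by
        intro h
        apply hx
        apply hinj
        simpa using h
      have h := hA.dotProduct_mulVec_pos hZx
      simp only [star_trivial] at h ⊢
      rw [Matrix.mul_assoc, ← Matrix.mulVec_mulVec, Matrix.dotProduct_mulVec,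
        Matrix.vecMul_transpose, ← Matrix.mulVec_mulVec]
      exact h
  have hEunit : IsUnit (Zᵀ * A * Z).det := (Matrix.isUnit_iff_isUnit_det _).mp hE.isUnit
  have hKE : (Zᵀ * A * Z)⁻¹ * (Zᵀ * A * Z) = 1 := Matrix.nonsing_inv_mul _ hEunit
  have hKt : ((Zᵀ * A * Z)⁻¹)ᵀ = (Zᵀ * A * Z)⁻¹ := by
    rw [Matrix.transpose_nonsing_inv]
    congr 1
    have := hE.1
    rw [Matrix.IsHermitian, Matrix.conjTranspose_eq_transpose_of_trivial] at this
    exact this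
  have hAt : Aᵀ = A := by
    have := hA.1
    rwa [Matrix.IsHermitian, Matrix.conjTranspose_eq_transpose_of_trivial] at this
  -- P is idempotent
  have hPP : P * P = P := by
    subst hP
    simp only [Matrix.sub_mul, Matrix.mul_sub, Matrix.mul_one, Matrix.one_mul]
    have : A * Z * (Zᵀ * A * Z)⁻¹ * Zᵀ * (A * Z * (Zᵀ * A * Z)⁻¹ * Zᵀ)
        = A * Z * (Zᵀ * A * Z)⁻¹ * Zᵀ := by
      calc A * Z * (Zᵀ * A * Z)⁻¹ * Zᵀ * (A * Z * (Zᵀ * A * Z)⁻¹ * Zᵀ)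
          = A * Z * ((Zᵀ * A * Z)⁻¹ * (Zᵀ * A * Z)) * ((Zᵀ * A * Z)⁻¹ * Zᵀ) := by
            simp only [Matrix.mul_assoc]
        _ = A * Z * (Zᵀ * A * Z)⁻¹ * Zᵀ := by
            rw [hKE]; simp only [Matrix.mul_one, Matrix.mul_assoc]
    rw [this]
    abel
  -- A Pᵀ = P A
  have hAP : A * Pᵀ = P * A := by
    subst hP
    simp only [Matrix.transpose_sub, Matrix.transpose_one, Matrix.transpose_mul,
      Matrix.transpose_transpose, hKt, hAt]
    simp only [Matrix.mul_sub, Matrix.sub_mul, Matrix.mul_one, Matrix.one_mul,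
      Matrix.mul_assoc]
  -- hence P A = P A Pᵀ
  have key : P * A = P * A * Pᴴ := by
    have : Pᴴ = Pᵀ := Matrix.conjTranspose_eq_transpose_of_trivial P
    rw [this]
    calc P * A = P * P * A := by rw [hPP]
      _ = P * (P * A) := by rw [Matrix.mul_assoc]
      _ = P * (A * Pᵀ) := by rw [hAP]
      _ = P * A * Pᵀ := by rw [Matrix.mul_assoc]
  rw [key]
  exact hA.posSemidef.mul_mul_conjTranspose_same P
end

section
/- Let A be symmetric positive definite, Z ∈ ℝ^{n×r} full column rank, and P = I − A Z (Zᵀ A Z)⁻¹ Zᵀ. Denoting eigenvalues in ascending order, the interlacing inequalities λ_k(A) ≤ λ_{r+k}(PA) ≤ λ_{r+k}(A) hold for k = 1,…,n−r. -/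
open Matrix RealInnerProductSpace Module Submodule

variable {n : ℕ}

section helpers
variable {M : Matrix (Fin n) (Fin n) ℝ} (hM : M.IsHermitian)

lemma repr_toEuclideanLin (x : EuclideanSpace ℝ (Fin n)) (i : Fin n) :
    hM.eigenvectorBasis.repr (Matrix.toEuclideanLin M x) i
      = hM.eigenvalues i * hM.eigenvectorBasis.repr x i := by
  have hb : Matrix.toEuclideanLin M (hM.eigenvectorBasis i)
      = hM.eigenvalues i • hM.eigenvectorBasis i := by
    apply (WithLp.equiv 2 _).injective
    simp [toEuclideanLin_apply, hM.mulVec_eigenvectorBasis]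
  have hsymm := (Matrix.isHermitian_iff_isSymmetric.1 hM)
  rw [OrthonormalBasis.repr_apply_apply, OrthonormalBasis.repr_apply_apply,
    ← hsymm (hM.eigenvectorBasis i) x, hb, inner_smul_left]
  simp

lemma quad_eq_sum (x : EuclideanSpace ℝ (Fin n)) :
    ⟪x, Matrix.toEuclideanLin M x⟫
      = ∑ i, hM.eigenvalues i * (hM.eigenvectorBasis.repr x i)^2 := by
  rw [← hM.eigenvectorBasis.repr.inner_map_map x (Matrix.toEuclideanLin M x)]
  rw [PiLp.inner_apply]
  refine Finset.sum_congr rfl fun i _ => ?_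
  rw [repr_toEuclideanLin hM]
  simp [RCLike.inner_apply]
  ring

lemma norm_eq_sum (x : EuclideanSpace ℝ (Fin n)) :
    ⟪x, x⟫ = ∑ i, (hM.eigenvectorBasis.repr x i)^2 := by
  rw [← hM.eigenvectorBasis.repr.inner_map_map x x, PiLp.inner_apply]
  refine Finset.sum_congr rfl fun i _ => ?_
  simp [RCLike.inner_apply]

lemma repr_zero_of_mem_span {S : Set (Fin n)} {x : EuclideanSpace ℝ (Fin n)}
    (hx : x ∈ Submodule.span ℝ (hM.eigenvectorBasis '' S)) {i : Fin n} (hi : i ∉ S) :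
    hM.eigenvectorBasis.repr x i = 0 := by
  rw [OrthonormalBasis.repr_apply_apply]
  have : Submodule.span ℝ (hM.eigenvectorBasis '' S)
      ≤ LinearMap.ker (innerSL ℝ (hM.eigenvectorBasis i)).toLinearMap := by
    rw [Submodule.span_le]
    rintro _ ⟨j, hj, rfl⟩
    have : i ≠ j := fun h => hi (h ▸ hj)
    simpa using hM.eigenvectorBasis.orthonormal.2 this
  simpa using this hx

lemma quad_le_of_mem_span {S : Finset (Fin n)} {t : ℝ}
    (ht : ∀ i ∈ S, hM.eigenvalues i ≤ t) {x : EuclideanSpace ℝ (Fin n)}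
    (hx : x ∈ Submodule.span ℝ (hM.eigenvectorBasis '' (S : Set (Fin n)))) :
    ⟪x, Matrix.toEuclideanLin M x⟫ ≤ t * ⟪x, x⟫ := by
  rw [quad_eq_sum hM, norm_eq_sum hM, Finset.mul_sum]
  refine Finset.sum_le_sum fun i _ => ?_
  by_cases hi : i ∈ S
  · exact mul_le_mul_of_nonneg_right (ht i hi) (sq_nonneg _)
  · rw [repr_zero_of_mem_span hM hx hi]; simp

lemma quad_ge_of_mem_span {S : Finset (Fin n)} {t : ℝ}
    (ht : ∀ i ∈ S, t ≤ hM.eigenvalues i) {x : EuclideanSpace ℝ (Fin n)}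
    (hx : x ∈ Submodule.span ℝ (hM.eigenvectorBasis '' (S : Set (Fin n)))) :
    t * ⟪x, x⟫ ≤ ⟪x, Matrix.toEuclideanLin M x⟫ := by
  rw [quad_eq_sum hM, norm_eq_sum hM, Finset.mul_sum]
  refine Finset.sum_le_sum fun i _ => ?_
  by_cases hi : i ∈ S
  · exact mul_le_mul_of_nonneg_right (ht i hi) (sq_nonneg _)
  · rw [repr_zero_of_mem_span hM hx hi]; simp

lemma finrank_span_eigvec (S : Finset (Fin n)) :
    finrank ℝ (Submodule.span ℝ (hM.eigenvectorBasis '' (S : Set (Fin n)))) = S.card := by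
  rw [Set.image_eq_range]
  have hli : LinearIndependent ℝ (fun x : (S : Set (Fin n)) => hM.eigenvectorBasis ↑x) :=
    (hM.eigenvectorBasis.orthonormal.linearIndependent).comp
      (fun x : (S : Set (Fin n)) => (x : Fin n)) Subtype.val_injective
  rw [finrank_span_eq_card hli]
  simp

end helpers
section matrixside
variable {r : ℕ}

lemma mulVec_injective_of_rank {Z : Matrix (Fin n) (Fin r) ℝ} (hZ : Z.rank = r) :
    Function.Injective (Z.mulVec) := by
  have h := LinearMap.finrank_range_add_finrank_ker (Z.mulVecLin)
  rw [show finrank ℝ (Fin r → ℝ) = r by simp] at h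
  have hker : finrank ℝ (LinearMap.ker Z.mulVecLin) = 0 := by
    have : finrank ℝ (LinearMap.range Z.mulVecLin) = r := hZ
    omega
  have : LinearMap.ker Z.mulVecLin = ⊥ := Submodule.finrank_eq_zero.1 hker
  have hinj := LinearMap.ker_eq_bot.1 this
  intro a b hab
  exact hinj (by simpa [Matrix.mulVecLin_apply] using hab)

lemma ZAZ_posdef {A : Matrix (Fin n) (Fin n) ℝ} (hA : A.PosDef)
    {Z : Matrix (Fin n) (Fin r) ℝ} (hZ : Z.rank = r) : (Zᵀ * A * Z).PosDef := by
  refine Matrix.PosDef.of_dotProduct_mulVec_pos ?_ ?_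
  · have := Matrix.isHermitian_conjTranspose_mul_mul Z hA.1
    simpa [Matrix.conjTranspose_eq_transpose_of_trivial] using this
  · intro x hx
    have hZx : Z *ᵥ x ≠ 0 := by
      intro h
      exact hx (mulVec_injective_of_rank hZ (by simpa using h))
    have := hA.dotProduct_mulVec_pos hZx
    have e : x ⬝ᵥ ((Zᵀ * A * Z) *ᵥ x) = (Z *ᵥ x) ⬝ᵥ (A *ᵥ (Z *ᵥ x)) := by
      rw [← Matrix.mulVec_mulVec, ← Matrix.mulVec_mulVec, Matrix.dotProduct_mulVec,
        Matrix.vecMul_transpose]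
    simp only [star_trivial, RCLike.re_to_real] at this ⊢
    rw [e]
    exact this

end matrixside

theorem deflation_eigenvalue_interlacing {n r : ℕ} (hr : r < n)
    (A : Matrix (Fin n) (Fin n) ℝ) (hA : A.PosDef)
    (Z : Matrix (Fin n) (Fin r) ℝ) (hZ : Z.rank = r)
    (P : Matrix (Fin n) (Fin n) ℝ)
    (hP : P = 1 - A * Z * (Zᵀ * A * Z)⁻¹ * Zᵀ)
    (hPA : (P * A).IsHermitian)
    (μ ν : Fin n → ℝ) (hμm : Monotone μ) (hνm : Monotone ν)
    (hμ : ∃ σ : Equiv.Perm (Fin n), μ = hA.1.eigenvalues ∘ σ)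
    (hν : ∃ σ : Equiv.Perm (Fin n), ν = hPA.eigenvalues ∘ σ) :
    ∀ k : Fin n, r ≤ (k : ℕ) →
      μ ⟨(k : ℕ) - r, lt_of_le_of_lt (Nat.sub_le _ _) k.2⟩ ≤ ν k ∧ ν k ≤ μ k := by
  obtain ⟨σ, hσ⟩ := hμ
  obtain ⟨τ, hτ⟩ := hν
  -- basic matrix facts
  have hAt : Aᵀ = A := by
    exact (by simpa [Matrix.conjTranspose_eq_transpose_of_trivial] using hA.1 : A.IsSymm)
  set W' := (Zᵀ * A * Z)⁻¹ with hW'def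
  have hW' : W'.PosDef := (ZAZ_posdef hA hZ).inv
  set Em := P * A - A with hEmdef
  have hPAEm : P * A = A + Em := by rw [hEmdef]; abel
  have hEmEq : Em = -((A * Z * W') * (Zᵀ * A)) := by
    rw [hEmdef, hP, Matrix.sub_mul, Matrix.one_mul, Matrix.mul_assoc (A * Z * W') Zᵀ A]
    abel
  -- quadratic form of Em is ≤ 0
  have hdot : ∀ x : EuclideanSpace ℝ (Fin n), ∀ M : Matrix (Fin n) (Fin n) ℝ,
      ⟪x, Matrix.toEuclideanLin M x⟫ = (WithLp.equiv 2 (Fin n → ℝ) x) ⬝ᵥ (M *ᵥ (WithLp.equiv 2 (Fin n → ℝ) x)) := by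
    intro x M
    simp [PiLp.inner_apply, RCLike.inner_apply, Matrix.toEuclideanLin_apply, dotProduct, mul_comm]
  have hNSD : ∀ x : EuclideanSpace ℝ (Fin n), ⟪x, Matrix.toEuclideanLin Em x⟫ ≤ 0 := by
    intro x
    rw [hdot x Em]
    set v := WithLp.equiv 2 (Fin n → ℝ) x with hv
    set u := (Zᵀ * A) *ᵥ v with hu
    have key : v ⬝ᵥ (((A * Z * W') * (Zᵀ * A)) *ᵥ v) = u ⬝ᵥ (W' *ᵥ u) := by
      rw [← Matrix.mulVec_mulVec, ← hu, ← Matrix.mulVec_mulVec, Matrix.dotProduct_mulVec]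
      congr 1
      rw [← Matrix.mulVec_transpose, Matrix.transpose_mul, hAt]
    have hpos : 0 ≤ u ⬝ᵥ (W' *ᵥ u) := by
      have := hW'.posSemidef.dotProduct_mulVec_nonneg u
      simpa using this
    rw [hEmEq, Matrix.neg_mulVec, dotProduct_neg, key]
    linarith
  -- kernel of Em
  set K := LinearMap.ker (Matrix.toEuclideanLin Em) with hKdef
  have hcomp : Matrix.toEuclideanLin ((A * Z * W') * (Zᵀ * A))
      = (Matrix.toEuclideanLin (A * Z * W')).comp (Matrix.toEuclideanLin (Zᵀ * A)) := by
    apply LinearMap.ext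
    intro x
    apply (WithLp.equiv 2 (Fin n → ℝ)).injective
    simp [Matrix.toEuclideanLin_apply, Matrix.mulVec_mulVec]
  have hK : n - r ≤ finrank ℝ K := by
    have hr1 : finrank ℝ (LinearMap.range (Matrix.toEuclideanLin Em)) ≤ r := by
      rw [hEmEq, map_neg, LinearMap.range_neg, hcomp]
      refine le_trans (Submodule.finrank_mono (LinearMap.range_comp_le_range _ _)) ?_
      refine le_trans (LinearMap.finrank_range_le _) ?_
      simp
    have h2 := LinearMap.finrank_range_add_finrank_ker (Matrix.toEuclideanLin Em)
    simp only [finrank_euclideanSpace, Fintype.card_fin] at h2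
    rw [hKdef]
    omega
  have hKquad : ∀ x ∈ K, ⟪x, Matrix.toEuclideanLin (P * A) x⟫
      = ⟪x, Matrix.toEuclideanLin A x⟫ := by
    intro x hx
    rw [hPAEm, map_add, LinearMap.add_apply, inner_add_right,
      LinearMap.mem_ker.1 hx, inner_zero_right, add_zero]
  have hcmp : ∀ x : EuclideanSpace ℝ (Fin n),
      ⟪x, Matrix.toEuclideanLin (P * A) x⟫ ≤ ⟪x, Matrix.toEuclideanLin A x⟫ := by
    intro x
    rw [hPAEm, map_add, LinearMap.add_apply, inner_add_right]
    have := hNSD x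
    linarith
  intro k hk
  set k' : Fin n := ⟨(k : ℕ) - r, lt_of_le_of_lt (Nat.sub_le _ _) k.2⟩ with hk'def
  have hfE : finrank ℝ (EuclideanSpace ℝ (Fin n)) = n := by simp
  constructor
  · -- μ k' ≤ ν k
    set U := Submodule.span ℝ
      (⇑hPA.eigenvectorBasis '' (((Finset.Iic k).image τ : Finset (Fin n)) : Set (Fin n))) with hU
    set V := Submodule.span ℝ
      (⇑hA.1.eigenvectorBasis '' (((Finset.Ici k').image σ : Finset (Fin n)) : Set (Fin n))) with hV
    have hUf : finrank ℝ U = (k : ℕ) + 1 := by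
      rw [hU, finrank_span_eigvec, Finset.card_image_of_injective _ τ.injective, Fin.card_Iic]
    have hVf : finrank ℝ V = n - ((k : ℕ) - r) := by
      rw [hV, finrank_span_eigvec, Finset.card_image_of_injective _ σ.injective, Fin.card_Ici]
    have hUV : r + 1 ≤ finrank ℝ (U ⊓ V : Submodule ℝ (EuclideanSpace ℝ (Fin n))) := by
      have h1 := Submodule.finrank_sup_add_finrank_inf_eq U V
      have h2 : finrank ℝ (U ⊔ V : Submodule ℝ (EuclideanSpace ℝ (Fin n))) ≤ n :=
        le_trans (Submodule.finrank_le _) (le_of_eq hfE)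
      have hkn := k.2
      omega
    have hfin : 1 ≤ finrank ℝ ((U ⊓ V) ⊓ K : Submodule ℝ (EuclideanSpace ℝ (Fin n))) := by
      have h1 := Submodule.finrank_sup_add_finrank_inf_eq (U ⊓ V) K
      have h2 : finrank ℝ ((U ⊓ V) ⊔ K : Submodule ℝ (EuclideanSpace ℝ (Fin n))) ≤ n :=
        le_trans (Submodule.finrank_le _) (le_of_eq hfE)
      omega
    have hne : ((U ⊓ V) ⊓ K : Submodule ℝ (EuclideanSpace ℝ (Fin n))) ≠ ⊥ := by
      intro h
      rw [h] at hfin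
      simp at hfin
    obtain ⟨x, hxmem, hx0⟩ := (Submodule.ne_bot_iff _).1 hne
    obtain ⟨⟨hxU, hxV⟩, hxK⟩ := hxmem
    have hq1 : μ k' * ⟪x, x⟫ ≤ ⟪x, Matrix.toEuclideanLin A x⟫ := by
      refine quad_ge_of_mem_span hA.1 (fun j hj => ?_) hxV
      obtain ⟨i, hi, rfl⟩ := Finset.mem_image.1 hj
      have : μ k' ≤ μ i := hμm (Finset.mem_Ici.1 hi)
      simpa [hσ] using this
    have hq2 : ⟪x, Matrix.toEuclideanLin (P * A) x⟫ ≤ ν k * ⟪x, x⟫ := by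
      refine quad_le_of_mem_span hPA (fun j hj => ?_) hxU
      obtain ⟨i, hi, rfl⟩ := Finset.mem_image.1 hj
      have : ν i ≤ ν k := hνm (Finset.mem_Iic.1 hi)
      simpa [hτ] using this
    have heq := hKquad x hxK
    have hxx : (0:ℝ) < ⟪x, x⟫ := by
      have hn := norm_pos_iff.2 hx0
      rw [real_inner_self_eq_norm_mul_norm]
      exact mul_pos hn hn
    have : μ k' * ⟪x, x⟫ ≤ ν k * ⟪x, x⟫ := by linarith
    exact (mul_le_mul_iff_of_pos_right hxx).1 this
  · -- ν k ≤ μ k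
    set U := Submodule.span ℝ
      (⇑hPA.eigenvectorBasis '' (((Finset.Ici k).image τ : Finset (Fin n)) : Set (Fin n))) with hU
    set V := Submodule.span ℝ
      (⇑hA.1.eigenvectorBasis '' (((Finset.Iic k).image σ : Finset (Fin n)) : Set (Fin n))) with hV
    have hUf : finrank ℝ U = n - (k : ℕ) := by
      rw [hU, finrank_span_eigvec, Finset.card_image_of_injective _ τ.injective, Fin.card_Ici]
    have hVf : finrank ℝ V = (k : ℕ) + 1 := by
      rw [hV, finrank_span_eigvec, Finset.card_image_of_injective _ σ.injective, Fin.card_Iic]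
    have hfin : 1 ≤ finrank ℝ (U ⊓ V : Submodule ℝ (EuclideanSpace ℝ (Fin n))) := by
      have h1 := Submodule.finrank_sup_add_finrank_inf_eq U V
      have h2 : finrank ℝ (U ⊔ V : Submodule ℝ (EuclideanSpace ℝ (Fin n))) ≤ n :=
        le_trans (Submodule.finrank_le _) (le_of_eq hfE)
      have hkn := k.2
      omega
    have hne : (U ⊓ V : Submodule ℝ (EuclideanSpace ℝ (Fin n))) ≠ ⊥ := by
      intro h
      rw [h] at hfin
      simp at hfin
    obtain ⟨x, hxmem, hx0⟩ := (Submodule.ne_bot_iff _).1 hne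
    obtain ⟨hxU, hxV⟩ := hxmem
    have hq1 : ν k * ⟪x, x⟫ ≤ ⟪x, Matrix.toEuclideanLin (P * A) x⟫ := by
      refine quad_ge_of_mem_span hPA (fun j hj => ?_) hxU
      obtain ⟨i, hi, rfl⟩ := Finset.mem_image.1 hj
      have : ν k ≤ ν i := hνm (Finset.mem_Ici.1 hi)
      simpa [hτ] using this
    have hq2 : ⟪x, Matrix.toEuclideanLin A x⟫ ≤ μ k * ⟪x, x⟫ := by
      refine quad_le_of_mem_span hA.1 (fun j hj => ?_) hxV
      obtain ⟨i, hi, rfl⟩ := Finset.mem_image.1 hj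
      have : μ i ≤ μ k := hμm (Finset.mem_Iic.1 hi)
      simpa [hσ] using this
    have hcmp' := hcmp x
    have hxx : (0:ℝ) < ⟪x, x⟫ := by
      have hn := norm_pos_iff.2 hx0
      rw [real_inner_self_eq_norm_mul_norm]
      exact mul_pos hn hn
    have : ν k * ⟪x, x⟫ ≤ μ k * ⟪x, x⟫ := by linarith
    exact (mul_le_mul_iff_of_pos_right hxx).1 this
end

section
/- Let A be symmetric positive definite, Z ∈ ℝ^{n×r} full column rank, and P = I − A Z (Zᵀ A Z)⁻¹ Zᵀ. Then the effective condition number of PA satisfies κ_eff(PA) := λₙ(PA)/λ_{r+1}(PA) ≤ λₙ(A)/λ₁(A) = κ(A). -/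
open Matrix Finset

namespace DeflationAux

lemma sum_dotProduct' {ι : Type*} {n : ℕ} (s : Finset ι) (f : ι → (Fin n → ℝ)) (y : Fin n → ℝ) :
    (∑ i ∈ s, f i) ⬝ᵥ y = ∑ i ∈ s, f i ⬝ᵥ y := by
  simp only [dotProduct, Finset.sum_apply, Finset.sum_mul]
  rw [Finset.sum_comm]

lemma dotProduct_sum' {ι : Type*} {n : ℕ} (s : Finset ι) (f : ι → (Fin n → ℝ)) (y : Fin n → ℝ) :
    y ⬝ᵥ (∑ i ∈ s, f i) = ∑ i ∈ s, y ⬝ᵥ f i := by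
  simp only [dotProduct, Finset.sum_apply, Finset.mul_sum]
  rw [Finset.sum_comm]

lemma dot_ortho_sum {ι : Type*} [Fintype ι] [DecidableEq ι] {n : ℕ}
    (w : ι → (Fin n → ℝ)) (hw : ∀ i j, w i ⬝ᵥ w j = if i = j then (1:ℝ) else 0)
    (c e : ι → ℝ) :
    (∑ i, c i • w i) ⬝ᵥ (∑ j, e j • w j) = ∑ i, c i * e i := by
  rw [sum_dotProduct']
  simp only [smul_dotProduct, dotProduct_sum', dotProduct_smul, hw, smul_eq_mul]
  simp [Finset.mul_sum, mul_ite, Finset.sum_ite_eq, mul_comm]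

lemma mulVec_sum_eig {ι : Type*} [Fintype ι] {n : ℕ}
    {B : Matrix (Fin n) (Fin n) ℝ} (w : ι → (Fin n → ℝ)) (d : ι → ℝ)
    (he : ∀ i, B *ᵥ w i = d i • w i) (c : ι → ℝ) :
    B *ᵥ (∑ i, c i • w i) = ∑ i, (d i * c i) • w i := by
  rw [← B.mulVecLin_apply, map_sum]
  refine Finset.sum_congr rfl fun i _ => ?_
  rw [_root_.map_smul, B.mulVecLin_apply, he i, smul_smul, mul_comm]

lemma quad_rep {ι : Type*} [Fintype ι] [DecidableEq ι] {n : ℕ}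
    {B : Matrix (Fin n) (Fin n) ℝ} (w : ι → (Fin n → ℝ)) (d : ι → ℝ)
    (hw : ∀ i j, w i ⬝ᵥ w j = if i = j then (1:ℝ) else 0)
    (he : ∀ i, B *ᵥ w i = d i • w i) (c : ι → ℝ) :
    (∑ i, c i • w i) ⬝ᵥ (B *ᵥ (∑ i, c i • w i)) = ∑ i, d i * c i ^ 2 := by
  rw [mulVec_sum_eig w d he c, dot_ortho_sum w hw]
  exact Finset.sum_congr rfl fun i _ => by ring

lemma eig_dot_ortho {n : ℕ} {B : Matrix (Fin n) (Fin n) ℝ} (hB : B.IsHermitian) (i j : Fin n) :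
    (hB.eigenvectorBasis i : Fin n → ℝ) ⬝ᵥ (hB.eigenvectorBasis j : Fin n → ℝ)
      = if i = j then 1 else 0 := by
  have h := orthonormal_iff_ite.mp hB.eigenvectorBasis.orthonormal i j
  rw [dotProduct_comm]
  simpa [EuclideanSpace.inner_eq_star_dotProduct] using h

lemma eig_mulVec {n : ℕ} {B : Matrix (Fin n) (Fin n) ℝ} (hB : B.IsHermitian) (j : Fin n) :
    B *ᵥ (hB.eigenvectorBasis j : Fin n → ℝ)
      = hB.eigenvalues j • (hB.eigenvectorBasis j : Fin n → ℝ) :=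
  hB.mulVec_eigenvectorBasis j

lemma eig_expand {n : ℕ} {B : Matrix (Fin n) (Fin n) ℝ} (hB : B.IsHermitian) (x : Fin n → ℝ) :
    (∑ j, ((hB.eigenvectorBasis j : Fin n → ℝ) ⬝ᵥ x) • (hB.eigenvectorBasis j : Fin n → ℝ))
      = x := by
  have h := congrArg WithLp.ofLp (hB.eigenvectorBasis.sum_repr' (WithLp.toLp 2 x))
  simp_rw [dotProduct_comm _ x]
  simpa [EuclideanSpace.inner_eq_star_dotProduct, WithLp.ofLp_sum] using h

lemma spectral_lb {n : ℕ} {B : Matrix (Fin n) (Fin n) ℝ} (hB : B.IsHermitian) {C : ℝ}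
    (h : ∀ j, C ≤ hB.eigenvalues j) (x : Fin n → ℝ) :
    C * (x ⬝ᵥ x) ≤ x ⬝ᵥ (B *ᵥ x) := by
  set c : Fin n → ℝ := fun j => (hB.eigenvectorBasis j : Fin n → ℝ) ⬝ᵥ x with hc
  have hx : (∑ j, c j • (hB.eigenvectorBasis j : Fin n → ℝ)) = x := eig_expand hB x
  rw [← hx, quad_rep _ _ (eig_dot_ortho hB) (eig_mulVec hB),
    dot_ortho_sum _ (eig_dot_ortho hB), Finset.mul_sum]
  refine Finset.sum_le_sum fun j _ => ?_
  rw [show c j * c j = c j ^ 2 by ring]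
  exact mul_le_mul_of_nonneg_right (h j) (sq_nonneg _)

lemma spectral_ub {n : ℕ} {B : Matrix (Fin n) (Fin n) ℝ} (hB : B.IsHermitian) {C : ℝ}
    (h : ∀ j, hB.eigenvalues j ≤ C) (x : Fin n → ℝ) :
    x ⬝ᵥ (B *ᵥ x) ≤ C * (x ⬝ᵥ x) := by
  set c : Fin n → ℝ := fun j => (hB.eigenvectorBasis j : Fin n → ℝ) ⬝ᵥ x with hc
  have hx : (∑ j, c j • (hB.eigenvectorBasis j : Fin n → ℝ)) = x := eig_expand hB x
  rw [← hx, quad_rep _ _ (eig_dot_ortho hB) (eig_mulVec hB),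
    dot_ortho_sum _ (eig_dot_ortho hB), Finset.mul_sum]
  refine Finset.sum_le_sum fun j _ => ?_
  rw [show c j * c j = c j ^ 2 by ring]
  exact mul_le_mul_of_nonneg_right (h j) (sq_nonneg _)

end DeflationAux

open DeflationAux

theorem deflation_effective_condition_number {n r : ℕ} (hr : r < n)
    (A : Matrix (Fin n) (Fin n) ℝ) (hA : A.PosDef)
    (Z : Matrix (Fin n) (Fin r) ℝ) (hZ : Z.rank = r)
    (P : Matrix (Fin n) (Fin n) ℝ)
    (hP : P = 1 - A * Z * (Zᵀ * A * Z)⁻¹ * Zᵀ)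
    (hPA : (P * A).IsHermitian)
    (μ ν : Fin n → ℝ) (hμm : Monotone μ) (hνm : Monotone ν)
    (hμ : ∃ σ : Equiv.Perm (Fin n), μ = hA.1.eigenvalues ∘ σ)
    (hν : ∃ σ : Equiv.Perm (Fin n), ν = hPA.eigenvalues ∘ σ) :
    ν ⟨n - 1, by omega⟩ / ν ⟨r, hr⟩ ≤ μ ⟨n - 1, by omega⟩ / μ ⟨0, by omega⟩ := by
  obtain ⟨σμ, hμeq⟩ := hμ
  obtain ⟨σν, hνeq⟩ := hν
  have hAt : Aᵀ = A := by
    have := hA.1.eq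
    rwa [conjTranspose_eq_transpose_of_trivial] at this
  have hZA : (Zᵀ * A)ᵀ = A * Z := by rw [transpose_mul, transpose_transpose, hAt]
  -- extremal eigenvalue facts
  have hμsymm : ∀ j, μ (σμ.symm j) = hA.1.eigenvalues j := fun j => by
    rw [hμeq]; simp
  have hνsymm : ∀ j, ν (σν.symm j) = hPA.eigenvalues j := fun j => by
    rw [hνeq]; simp
  have hμlb : ∀ j, μ ⟨0, by omega⟩ ≤ hA.1.eigenvalues j := fun j => by
    have h := hμm (show (⟨0, by omega⟩ : Fin n) ≤ σμ.symm j from Fin.mk_le_of_le_val (Nat.zero_le _))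
    rwa [hμsymm] at h
  have hμub : ∀ j, hA.1.eigenvalues j ≤ μ ⟨n - 1, by omega⟩ := fun j => by
    have h := hμm (show σμ.symm j ≤ (⟨n - 1, by omega⟩ : Fin n) from
      Fin.le_def.mpr (by have := (σμ.symm j).isLt; simp; omega))
    rwa [hμsymm] at h
  have hνub : ∀ j, hPA.eigenvalues j ≤ ν ⟨n - 1, by omega⟩ := fun j => by
    have h := hνm (show σν.symm j ≤ (⟨n - 1, by omega⟩ : Fin n) from
      Fin.le_def.mpr (by have := (σν.symm j).isLt; simp; omega))
    rwa [hνsymm] at h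
  have hμ0pos : 0 < μ ⟨0, by omega⟩ := by
    rw [hμeq]; exact hA.eigenvalues_pos _
  -- injectivity of Z
  have hZinj : Function.Injective Z.mulVecLin := by
    rw [← LinearMap.ker_eq_bot]
    have h1 := Z.mulVecLin.finrank_range_add_finrank_ker
    rw [show Module.finrank ℝ (Fin r → ℝ) = r by simp] at h1
    have h2 : Z.rank = Module.finrank ℝ (LinearMap.range Z.mulVecLin) := rfl
    have h3 : Module.finrank ℝ (LinearMap.ker Z.mulVecLin) = 0 := by omega
    exact Submodule.finrank_eq_zero.mp h3
  -- Zᵀ A Z is positive definite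
  have hM : (Zᵀ * A * Z).PosDef := by
    refine Matrix.PosDef.of_dotProduct_mulVec_pos ?_ ?_
    · have h := Matrix.isHermitian_conjTranspose_mul_mul Z hA.1
      rwa [conjTranspose_eq_transpose_of_trivial] at h
    · intro x hx
      have hZx : Z *ᵥ x ≠ 0 := by
        intro h
        exact hx (hZinj (by simpa [Z.mulVecLin_apply] using h))
      have h := hA.dotProduct_mulVec_pos hZx
      have hs : ∀ {m : ℕ} (y : Fin m → ℝ), star y = y := fun y => funext fun _ => rfl
      have heq : star x ⬝ᵥ ((Zᵀ * A * Z) *ᵥ x) = star (Z *ᵥ x) ⬝ᵥ (A *ᵥ (Z *ᵥ x)) := by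
        rw [hs, hs, Matrix.mul_assoc, ← Matrix.mulVec_mulVec, Matrix.dotProduct_mulVec,
          Matrix.vecMul_transpose, ← Matrix.mulVec_mulVec]
      rwa [heq]
  have hs : ∀ {m : ℕ} (y : Fin m → ℝ), star y = y := fun y => funext fun _ => rfl
  set N := A * Z * (Zᵀ * A * Z)⁻¹ * Zᵀ * A with hN_def
  have hPAeq : P * A = A - N := by
    rw [hP, hN_def, Matrix.sub_mul, Matrix.one_mul]
  have hNps : N.PosSemidef := by
    have h := (hM.inv.posSemidef).conjTranspose_mul_mul_same (Zᵀ * A)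
    rw [conjTranspose_eq_transpose_of_trivial, hZA] at h
    rwa [hN_def, Matrix.mul_assoc (A * Z * (Zᵀ * A * Z)⁻¹) Zᵀ A]
  -- Part 1 : ν_max ≤ μ_max
  have hνtop_le : ν ⟨n - 1, by omega⟩ ≤ μ ⟨n - 1, by omega⟩ := by
    set j0 := σν ⟨n - 1, by omega⟩ with hj0
    set v : Fin n → ℝ := (hPA.eigenvectorBasis j0 : Fin n → ℝ) with hv_def
    have hv1 : v ⬝ᵥ v = 1 := by simpa using eig_dot_ortho hPA j0 j0
    have hquad : v ⬝ᵥ ((P * A) *ᵥ v) = hPA.eigenvalues j0 := by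
      rw [hv_def, eig_mulVec hPA, dotProduct_smul]
      rw [← hv_def, smul_eq_mul, hv1, mul_one]
    have hν_eq : ν ⟨n - 1, by omega⟩ = hPA.eigenvalues j0 := by rw [hνeq]; rfl
    have hNv : 0 ≤ v ⬝ᵥ (N *ᵥ v) := by have := hNps.dotProduct_mulVec_nonneg v; rwa [hs] at this
    have hsub : v ⬝ᵥ ((P * A) *ᵥ v) = v ⬝ᵥ (A *ᵥ v) - v ⬝ᵥ (N *ᵥ v) := by
      rw [hPAeq, Matrix.sub_mulVec, dotProduct_sub]
    have hub := spectral_ub hA.1 hμub v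
    rw [hv1, mul_one] at hub
    rw [hν_eq, ← hquad, hsub]
    linarith
  -- Part 2 : μ_min ≤ ν_{r+1}
  have hrn : r + 1 ≤ n := hr
  have hkey : μ ⟨0, by omega⟩ ≤ ν ⟨r, hr⟩ := by
    by_contra hcon
    push_neg at hcon
    set w : Fin (r + 1) → (Fin n → ℝ) :=
      fun i => (hPA.eigenvectorBasis (σν (Fin.castLE hrn i)) : Fin n → ℝ) with hw_def
    have hw : ∀ i j, w i ⬝ᵥ w j = if i = j then (1:ℝ) else 0 := by
      intro i j
      rw [hw_def]
      rw [eig_dot_ortho hPA]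
      simp only [σν.injective.eq_iff, (Fin.castLE_injective hrn).eq_iff]
    have hli : LinearIndependent ℝ w := by
      rw [Fintype.linearIndependent_iff]
      intro g hg i
      have h2 := congrArg (fun y => y ⬝ᵥ w i) hg
      simpa [sum_dotProduct', smul_dotProduct, hw, Finset.sum_ite_eq'] using h2
    set W := Submodule.span ℝ (Set.range w) with hW_def
    have hWrank : Module.finrank ℝ W = r + 1 := by
      rw [hW_def, finrank_span_eq_card hli]; simp
    set S := LinearMap.ker (Zᵀ * A).mulVecLin with hS_def
    have hSrank : n - r ≤ Module.finrank ℝ S := by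
      have h1 := (Zᵀ * A).mulVecLin.finrank_range_add_finrank_ker
      have h2 : Module.finrank ℝ (LinearMap.range (Zᵀ * A).mulVecLin) ≤ r := by
        have h3 := Submodule.finrank_le (LinearMap.range (Zᵀ * A).mulVecLin)
        simpa using h3
      rw [show Module.finrank ℝ (Fin n → ℝ) = n by simp, ← hS_def] at h1
      omega
    have hdisj : Disjoint W S := by
      rw [Submodule.disjoint_def]
      intro v hvW hvS
      by_contra hv0
      have hvv : 0 < v ⬝ᵥ v := by
        obtain ⟨i, hi⟩ := Function.ne_iff.mp hv0
        have h0 : v ⬝ᵥ v = ∑ i, v i ^ 2 := by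
          simp [dotProduct, pow_two]
        rw [h0]
        refine Finset.sum_pos' (fun i _ => sq_nonneg _) ⟨i, Finset.mem_univ i, ?_⟩
        have : v i ≠ 0 := by simpa using hi
        positivity
      obtain ⟨c, hc⟩ := (Submodule.mem_span_range_iff_exists_fun ℝ).mp hvW
      have hquadW : v ⬝ᵥ ((P * A) *ᵥ v) ≤ ν ⟨r, hr⟩ * (v ⬝ᵥ v) := by
        rw [← hc, quad_rep w _ hw (fun i => eig_mulVec hPA _),
          dot_ortho_sum w hw, Finset.mul_sum]
        refine Finset.sum_le_sum fun i _ => ?_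
        have hii : hPA.eigenvalues (σν (Fin.castLE hrn i)) = ν (Fin.castLE hrn i) := by
          rw [hνeq]; rfl
        have hle : ν (Fin.castLE hrn i) ≤ ν ⟨r, hr⟩ := by
          refine hνm (Fin.le_def.mpr ?_)
          have := i.isLt
          simp only [Fin.coe_castLE]
          omega
        rw [hii, show c i * c i = c i ^ 2 by ring]
        exact mul_le_mul_of_nonneg_right hle (sq_nonneg _)
      have hv0' : (Zᵀ * A) *ᵥ v = 0 := by
        have := LinearMap.mem_ker.mp hvS
        rwa [Matrix.mulVecLin_apply] at this
      have hSv : (P * A) *ᵥ v = A *ᵥ v := by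
        rw [hPAeq, Matrix.sub_mulVec]
        have hNv0 : N *ᵥ v = 0 := by
          rw [hN_def, Matrix.mul_assoc (A * Z * (Zᵀ * A * Z)⁻¹) Zᵀ A,
            ← Matrix.mulVec_mulVec, hv0', Matrix.mulVec_zero]
        rw [hNv0, sub_zero]
      have hlb := spectral_lb hA.1 hμlb v
      rw [hSv] at hquadW
      nlinarith
    have hfin := Submodule.finrank_add_finrank_le_of_disjoint hdisj
    rw [hWrank, show Module.finrank ℝ (Fin n → ℝ) = n by simp] at hfin
    omega
  -- conclude
  have hμtop_nonneg : 0 ≤ μ ⟨n - 1, by omega⟩ :=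
    le_trans hμ0pos.le (hμm (Fin.mk_le_of_le_val (Nat.zero_le _)))
  exact div_le_div₀ hμtop_nonneg hνtop_le hμ0pos hkey
end

section
/- Let A ∈ ℝ^{n×n} be symmetric positive semidefinite with nullity r < n, let b ≠ 0 with Ax = b consistent, and let x_j be any vector with residual r_j = b − A x_j. Then ‖x − x_j‖_A / ‖x‖_A ≤ √(λₙ(A)/λ_{r+1}(A)) · ‖r_j‖₂ / ‖b‖₂, where ‖v‖_A = √(vᵀAv) and λ_{r+1}(A) is the smallest nonzero eigenvalue of A. -/
open Matrix

lemma conj_form {n : ℕ} (A U : Matrix (Fin n) (Fin n) ℝ) (ν : Fin n → ℝ) (c : ℝ)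
    (hU : star U * U = 1) (hspec : A = U * diagonal ν * star U) :
    c • A - A * A = U * diagonal (fun i => c * ν i - ν i ^ 2) * star U := by
  have h2 : (U * diagonal ν * star U) * (U * diagonal ν * star U)
      = U * (diagonal ν * diagonal ν) * star U := by
    simp only [Matrix.mul_assoc]
    rw [show star U * (U * (diagonal ν * star U)) = diagonal ν * star U from by
      rw [← Matrix.mul_assoc, hU, Matrix.one_mul]]
  have hmid : c • diagonal ν - diagonal ν * diagonal ν
      = diagonal (fun i => c * ν i - ν i ^ 2) := by
    rw [diagonal_mul_diagonal]
    ext i j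
    by_cases h : i = j <;> simp [h, diagonal_apply, pow_two]
  rw [hspec, h2]
  rw [show c • (U * diagonal ν * star U) = U * (c • diagonal ν) * star U from by
    rw [Matrix.mul_smul, Matrix.smul_mul]]
  rw [← Matrix.sub_mul, ← Matrix.mul_sub, hmid]

lemma conj_form' {n : ℕ} (A U : Matrix (Fin n) (Fin n) ℝ) (ν : Fin n → ℝ) (c : ℝ)
    (hU : star U * U = 1) (hspec : A = U * diagonal ν * star U) :
    A * A - c • A = U * diagonal (fun i => ν i ^ 2 - c * ν i) * star U := by
  have h := conj_form A U ν c hU hspec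
  rw [← neg_sub (c • A) (A * A), h, ← Matrix.neg_mul, ← Matrix.mul_neg]
  congr 2
  ext i j
  by_cases hij : i = j <;> simp [diagonal_apply, hij] <;> ring

lemma spec_real {n : ℕ} {A : Matrix (Fin n) (Fin n) ℝ} (hA : A.IsHermitian) :
    A = (hA.eigenvectorUnitary : Matrix (Fin n) (Fin n) ℝ) * diagonal hA.eigenvalues *
      star (hA.eigenvectorUnitary : Matrix (Fin n) (Fin n) ℝ) := by
  have := hA.spectral_theorem
  simpa [RCLike.ofReal_real_eq_id] using this

lemma star_mul_self_eigen {n : ℕ} {A : Matrix (Fin n) (Fin n) ℝ} (hA : A.IsHermitian) :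
    star (hA.eigenvectorUnitary : Matrix (Fin n) (Fin n) ℝ) *
      (hA.eigenvectorUnitary : Matrix (Fin n) (Fin n) ℝ) = 1 :=
  hA.eigenvectorUnitary.2.1

lemma sym_dot {n : ℕ} {A : Matrix (Fin n) (Fin n) ℝ} (hA : A.IsHermitian)
    (v w : Fin n → ℝ) : v ⬝ᵥ (A *ᵥ w) = (A *ᵥ v) ⬝ᵥ w := by
  have hAT : Aᵀ = A := by rw [← conjTranspose_eq_transpose_of_trivial, hA.eq]
  rw [dotProduct_mulVec, ← mulVec_transpose, hAT]

lemma quad_upper {n : ℕ} {A : Matrix (Fin n) (Fin n) ℝ} (hA : A.PosSemidef) (c : ℝ)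
    (h : ∀ i, 0 ≤ c * hA.1.eigenvalues i - hA.1.eigenvalues i ^ 2) (v : Fin n → ℝ) :
    (A *ᵥ v) ⬝ᵥ (A *ᵥ v) ≤ c * (v ⬝ᵥ (A *ᵥ v)) := by
  set U : Matrix (Fin n) (Fin n) ℝ := (hA.1.eigenvectorUnitary : Matrix (Fin n) (Fin n) ℝ) with hUdef
  have hform := conj_form A U hA.1.eigenvalues c (star_mul_self_eigen hA.1) (spec_real hA.1)
  have hpsd : (c • A - A * A).PosSemidef := by
    rw [hform, show star U = Uᴴ from rfl]
    exact (Matrix.PosSemidef.diagonal (fun i => h i)).mul_mul_conjTranspose_same U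
  have h2 := hpsd.dotProduct_mulVec_nonneg v
  simp only [star_trivial, Matrix.sub_mulVec, Matrix.smul_mulVec, dotProduct_sub,
    dotProduct_smul, smul_eq_mul, sub_nonneg, ← Matrix.mulVec_mulVec] at h2
  calc (A *ᵥ v) ⬝ᵥ (A *ᵥ v) = v ⬝ᵥ (A *ᵥ (A *ᵥ v)) := (sym_dot hA.1 v (A *ᵥ v)).symm
    _ ≤ c * (v ⬝ᵥ (A *ᵥ v)) := h2

lemma quad_lower {n : ℕ} {A : Matrix (Fin n) (Fin n) ℝ} (hA : A.PosSemidef) (c : ℝ)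
    (h : ∀ i, 0 ≤ hA.1.eigenvalues i ^ 2 - c * hA.1.eigenvalues i) (v : Fin n → ℝ) :
    c * (v ⬝ᵥ (A *ᵥ v)) ≤ (A *ᵥ v) ⬝ᵥ (A *ᵥ v) := by
  set U : Matrix (Fin n) (Fin n) ℝ := (hA.1.eigenvectorUnitary : Matrix (Fin n) (Fin n) ℝ) with hUdef
  have hform := conj_form' A U hA.1.eigenvalues c (star_mul_self_eigen hA.1) (spec_real hA.1)
  have hpsd : (A * A - c • A).PosSemidef := by
    rw [hform, show star U = Uᴴ from rfl]
    exact (Matrix.PosSemidef.diagonal (fun i => h i)).mul_mul_conjTranspose_same U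
  have h2 := hpsd.dotProduct_mulVec_nonneg v
  simp only [star_trivial, Matrix.sub_mulVec, Matrix.smul_mulVec, dotProduct_sub,
    dotProduct_smul, smul_eq_mul, sub_nonneg, ← Matrix.mulVec_mulVec] at h2
  calc c * (v ⬝ᵥ (A *ᵥ v)) ≤ v ⬝ᵥ (A *ᵥ (A *ᵥ v)) := h2
    _ = (A *ᵥ v) ⬝ᵥ (A *ᵥ v) := sym_dot hA.1 v (A *ᵥ v)

lemma elem_lower (t c : ℝ) (h0 : 0 ≤ t) (h : t ≠ 0 → c ≤ t) : 0 ≤ t ^ 2 - c * t := by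
  by_cases ht : t = 0
  · simp [ht]
  · nlinarith [h ht, lt_of_le_of_ne h0 (Ne.symm ht)]

lemma elem_upper (t M : ℝ) (h0 : 0 ≤ t) (h : t ≤ M) : 0 ≤ M * t - t ^ 2 := by nlinarith

lemma qx_pos (Qx B M : ℝ) (hB : 0 < B) (hM : 0 < M) (h2 : B ≤ M * Qx) : 0 < Qx := by
  nlinarith

lemma combine_div (Qe Qx R B c M : ℝ) (hc : 0 < c) (hB : 0 < B) (hQx : 0 < Qx)
    (hQe : 0 ≤ Qe) (hR : 0 ≤ R) (h1 : c * Qe ≤ R) (h2 : B ≤ M * Qx) :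
    Qe / Qx ≤ (M / c) * (R / B) := by
  rw [div_mul_div_comm, div_le_div_iff₀ hQx (by positivity)]
  nlinarith [mul_le_mul h1 h2 hB.le hR]


theorem psd_relative_error_bound {n r : ℕ} (hr : r < n)
    (A : Matrix (Fin n) (Fin n) ℝ) (hA : A.PosSemidef)
    (hker : Module.finrank ℝ (LinearMap.ker (Matrix.toLin' A)) = r)
    (μ : Fin n → ℝ) (hμm : Monotone μ)
    (hμ : ∃ σ : Equiv.Perm (Fin n), μ = hA.1.eigenvalues ∘ σ)
    (b x xj : Fin n → ℝ) (hb : b ≠ 0) (hx : A *ᵥ x = b)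
    (rj : Fin n → ℝ) (hrj : rj = b - A *ᵥ xj) :
    Real.sqrt ((x - xj) ⬝ᵥ (A *ᵥ (x - xj))) / Real.sqrt (x ⬝ᵥ (A *ᵥ x)) ≤
      Real.sqrt (μ ⟨n - 1, by omega⟩ / μ ⟨r, hr⟩) *
        (Real.sqrt (rj ⬝ᵥ rj) / Real.sqrt (b ⬝ᵥ b)) := by
  obtain ⟨σ, hμσ⟩ := hμ
  set ν := hA.1.eigenvalues with hνdef
  -- counting zero eigenvalues
  have h1 := LinearMap.finrank_range_add_finrank_ker (Matrix.toLin' A)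
  rw [hker] at h1
  have hfr : Module.finrank ℝ (Fin n → ℝ) = n := by simp
  have hrange : Module.finrank ℝ (LinearMap.range (Matrix.toLin' A)) = n - r := by omega
  have hrank : A.rank = n - r := by
    rw [Matrix.rank, ← Matrix.toLin'_apply', hrange]
  have hcard_ne : Fintype.card {i // ν i ≠ 0} = n - r := by
    rw [← hA.1.rank_eq_card_non_zero_eigs, hrank]
  have hle : Fintype.card {i : Fin n // ν i = 0} ≤ n := by
    simpa using Fintype.card_subtype_le (fun i : Fin n => ν i = 0)
  have hcompl := Fintype.card_subtype_compl (fun i : Fin n => ν i = 0)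
  simp only [Fintype.card_fin] at hcompl
  have hcard0 : Fintype.card {i : Fin n // ν i = 0} = r := by
    have : Fintype.card {i : Fin n // ¬ ν i = 0} = n - r := hcard_ne
    omega
  have hcardμ : Fintype.card {i : Fin n // μ i = 0} = r := by
    rw [← hcard0]
    exact Fintype.card_congr (Equiv.subtypeEquiv σ (fun i => by rw [hμσ]; simp))
  have hμnn : ∀ i, 0 ≤ μ i := fun i => by
    rw [hμσ]; exact hA.eigenvalues_nonneg _
  have hνnn : ∀ i, 0 ≤ ν i := fun i => hA.eigenvalues_nonneg i
  -- μ vanishes below r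
  have hzero : ∀ j : Fin n, (j : ℕ) < r → μ j = 0 := by
    intro j hj
    by_contra hne
    have hposj : 0 < μ j := lt_of_le_of_ne (hμnn j) (Ne.symm hne)
    have hsub : ∀ i : Fin n, μ i = 0 → (i : ℕ) < (j : ℕ) := by
      intro i hi
      by_contra hge
      push_neg at hge
      have : μ j ≤ μ i := hμm (show j ≤ i from Fin.le_def.mpr hge)
      rw [hi] at this
      linarith
    have hinj : Fintype.card {i : Fin n // μ i = 0} ≤ (j : ℕ) := by
      have := Fintype.card_le_of_injective
        (fun p : {i : Fin n // μ i = 0} => (⟨(p.1 : ℕ), hsub p.1 p.2⟩ : Fin (j : ℕ)))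
        (fun p q hpq => by
          apply Subtype.ext; apply Fin.ext
          simpa using congrArg Fin.val hpq)
      simpa using this
    omega
  -- μ ⟨r⟩ is positive
  have hcpos : 0 < μ ⟨r, hr⟩ := by
    rcases lt_or_eq_of_le (hμnn ⟨r, hr⟩) with h | h
    · exact h
    have hall : ∀ k : Fin (r + 1), μ ⟨(k : ℕ), by omega⟩ = 0 := by
      intro k
      have hk : (⟨(k : ℕ), by omega⟩ : Fin n) ≤ ⟨r, hr⟩ :=
        Fin.mk_le_mk.mpr (Nat.lt_succ_iff.mp k.isLt)
      have h1 := hμm hk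
      have h0 := hμnn (⟨(k : ℕ), by omega⟩ : Fin n)
      rw [← h] at h1
      exact le_antisymm h1 h0
    have hinj : r + 1 ≤ Fintype.card {i : Fin n // μ i = 0} := by
      have := Fintype.card_le_of_injective
        (fun k : Fin (r + 1) => (⟨⟨(k : ℕ), by omega⟩, hall k⟩ : {i : Fin n // μ i = 0}))
        (fun p q hpq => by
          apply Fin.ext
          simpa using congrArg Fin.val (congrArg Subtype.val hpq))
      simpa using this
    omega
  set c := μ ⟨r, hr⟩ with hcdef
  set M := μ ⟨n - 1, by omega⟩ with hMdef
  have hνμ : ∀ i, ν i = μ (σ.symm i) := fun i => by rw [hμσ]; simp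
  have hne_ge : ∀ i, ν i ≠ 0 → c ≤ ν i := by
    intro i hne
    rw [hνμ i] at hne ⊢
    by_cases hlt : ((σ.symm i : Fin n) : ℕ) < r
    · exact absurd (hzero _ hlt) hne
    · push_neg at hlt
      exact hμm (by rw [Fin.le_def]; simpa using hlt)
  have hMax : ∀ i, ν i ≤ M := by
    intro i
    rw [hνμ i]
    exact hμm (by rw [Fin.le_def]; simpa using Nat.le_sub_one_of_lt (σ.symm i).isLt)
  have hcM : c ≤ M := hμm (Fin.mk_le_mk.mpr (by omega))
  have hMpos : 0 < M := lt_of_lt_of_le hcpos hcM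
  -- quadratic form bounds
  have h_low := quad_lower hA c (fun i => elem_lower _ _ (hνnn i) (hne_ge i)) (x - xj)
  have h_up := quad_upper hA M (fun i => elem_upper _ _ (hνnn i) (hMax i)) x
  have he : A *ᵥ (x - xj) = rj := by
    rw [hrj, ← hx, Matrix.mulVec_sub]
  nth_rw 2 3 [he] at h_low
  nth_rw 1 2 [hx] at h_up
  have hB : 0 < b ⬝ᵥ b := by
    have := Matrix.dotProduct_self_star_pos_iff (v := b) |>.mpr hb
    simpa using this
  have hQe : 0 ≤ (x - xj) ⬝ᵥ (A *ᵥ (x - xj)) := by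
    have := hA.dotProduct_mulVec_nonneg (x - xj); simpa using this
  have hQx0 : 0 ≤ x ⬝ᵥ (A *ᵥ x) := by
    have := hA.dotProduct_mulVec_nonneg x; simpa using this
  have hQx : 0 < x ⬝ᵥ (A *ᵥ x) := qx_pos _ _ _ hB hMpos h_up
  have hR : 0 ≤ rj ⬝ᵥ rj := le_trans (mul_nonneg hcpos.le hQe) h_low
  have hgoal : (x - xj) ⬝ᵥ (A *ᵥ (x - xj)) / (x ⬝ᵥ (A *ᵥ x)) ≤
      (M / c) * (rj ⬝ᵥ rj / (b ⬝ᵥ b)) :=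
    combine_div _ _ _ _ _ _ hcpos hB hQx hQe hR h_low h_up
  calc Real.sqrt ((x - xj) ⬝ᵥ (A *ᵥ (x - xj))) / Real.sqrt (x ⬝ᵥ (A *ᵥ x))
      = Real.sqrt ((x - xj) ⬝ᵥ (A *ᵥ (x - xj)) / (x ⬝ᵥ (A *ᵥ x))) := by
        rw [Real.sqrt_div hQe]
    _ ≤ Real.sqrt ((M / c) * (rj ⬝ᵥ rj / (b ⬝ᵥ b))) := Real.sqrt_le_sqrt hgoal
    _ = Real.sqrt (M / c) * (Real.sqrt (rj ⬝ᵥ rj) / Real.sqrt (b ⬝ᵥ b)) := by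
        rw [Real.sqrt_mul (by positivity), Real.sqrt_div hR]
end
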